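/- For every Motzkin path p of length n, ar(p) ≤ ⌊n²/4⌋; moreover this bound is attained: if n = 2k then ar(U^k D^k) = ⌊n²/4⌋, and if n = 2k+1 then ar(U^k H D^k) = ⌊n²/4⌋. -/

import Mathlib

/-- The three kinds of steps of a Motzkin path. -/
inductive Step : Type
  | U : Step
  | D : Step
  | H : Step
deriving DecidableEq
instance : Fintype Step :=
  ⟨{Step.U, Step.D, Step.H}, fun x => by cases x <;> simp⟩
/-- Number of indices `i` with `i < m` (i.e. in the prefix of length `m`,
with 0-based indexing) at which the word `p` has the letter `s`. -/
def countIn {n : ℕ} (p : Fin n → Step) (s : Step) (m : ℕ) : ℕ :=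
  (Finset.univ.filter (fun i : Fin n => (i : ℕ) < m ∧ p i = s)).card
/-- A word `p` of length `n` over `{U, D, H}` is a Motzkin path if every
prefix contains at least as many `U`'s as `D`'s and the whole word contains
equally many `U`'s and `D`'s. -/
def IsMotzkin {n : ℕ} (p : Fin n → Step) : Prop :=
  (∀ m ≤ n, countIn p Step.D m ≤ countIn p Step.U m) ∧
  countIn p Step.U n = countIn p Step.D n
/-- The height `h_i` of step `i`: the number of `j ≤ i` with `p_j = U` minus
the number of `j ≤ i` with `p_j = D`, increased by `1` when `p_i = D`. -/
def heightAt {n : ℕ} (p : Fin n → Step) (i : Fin n) : ℕ :=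
  ((Finset.univ.filter (fun j : Fin n => j ≤ i ∧ p j = Step.U)).card
    - (Finset.univ.filter (fun j : Fin n => j ≤ i ∧ p j = Step.D)).card)
    + (if p i = Step.D then 1 else 0)
/-- The area below a Motzkin path:
`ar(p) = ∑_{i : p_i = H} h_i + ∑_{i : p_i ∈ {U,D}} (h_i - 1/2)`. -/
def area {n : ℕ} (p : Fin n → Step) : ℚ :=
  (∑ i ∈ Finset.univ.filter (fun i : Fin n => p i = Step.H),
    (heightAt p i : ℚ))
  + ∑ i ∈ Finset.univ.filter (fun i : Fin n => p i = Step.U ∨ p i = Step.D),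
      ((heightAt p i : ℚ) - 1/2)
/-- The Motzkin path `U^k D^k`. -/
def ukdk (k : ℕ) : Fin (2 * k) → Step := fun i =>
  if (i : ℕ) < k then Step.U else Step.D

/-- The Motzkin path `U^k H D^k`. -/
def ukhdk (k : ℕ) : Fin (2 * k + 1) → Step := fun i =>
  if (i : ℕ) < k then Step.U else if (i : ℕ) = k then Step.H else Step.D

/-!
Let `ℓ m` be the height of a path after `m` steps. A `U` step starting at height `ℓ`
contributes `ℓ + 1/2` to the area, a `D` step `ℓ - 1/2` and an `H` step `ℓ`, so the area of a
Motzkin path is `∑_{m < n} ℓ m`. Since `ℓ` moves by at most one per step and vanishes at both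
ends, `ℓ m ≤ min m (n - m)`, and `∑_{m < n} min m (n - m) = ⌊n²/4⌋`. The paths `U^k D^k` and
`U^k H D^k` have exactly this tent as their height profile.
-/

open Finset

namespace Step

def rise : Step → ℤ
  | U => 1
  | D => -1
  | H => 0

end Step

section Bridge

theorem abs_sub_le_of_abs_succ_sub_le_one {f : ℕ → ℤ} {n : ℕ}
    (hf : ∀ m < n, |f (m + 1) - f m| ≤ 1) {i j : ℕ} (hij : i ≤ j) (hjn : j ≤ n) :
    |f j - f i| ≤ j - i := by
  induction j, hij using Nat.le_induction with
  | base => simp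
  | succ j hij ih =>
    have htri := abs_sub_le (f (j + 1)) (f j) (f i)
    have hstep := hf j (by omega)
    push_cast
    linarith [ih (by omega)]

theorem sum_range_min_sub (n : ℕ) : ∑ j ∈ range n, min j (n - j) = n ^ 2 / 4 := by
  induction n using Nat.twoStepInduction with
  | zero => simp
  | one => simp
  | more n ih _ =>
    rw [sum_range_succ', sum_range_succ]
    have hshift : ∀ j ∈ range n, min (j + 1) (n + 2 - (j + 1)) = min j (n - j) + 1 := by
      intro j hj
      have := mem_range.1 hj
      omega
    rw [sum_congr rfl hshift, sum_add_distrib, ih]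
    simp only [sum_const, card_range, smul_eq_mul, mul_one]
    have : (n + 2) ^ 2 = n ^ 2 + 4 * n + 4 := by ring
    omega

theorem sum_range_le_of_abs_succ_sub_le_one {f : ℕ → ℤ} {n : ℕ} (h0 : f 0 = 0) (hn : f n = 0)
    (hf : ∀ m < n, |f (m + 1) - f m| ≤ 1) : ∑ j ∈ range n, f j ≤ ((n ^ 2 / 4 : ℕ) : ℤ) := by
  rw [← sum_range_min_sub, Nat.cast_sum]
  refine sum_le_sum fun j hj => ?_
  have hjn := (mem_range.1 hj).le
  have hleft := abs_sub_le_of_abs_succ_sub_le_one hf (Nat.zero_le j) hjn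
  have hright := abs_sub_le_of_abs_succ_sub_le_one hf hjn le_rfl
  rw [h0, sub_zero] at hleft
  rw [hn, zero_sub, abs_neg] at hright
  push_cast [Nat.cast_sub hjn]
  exact le_min (le_of_abs_le hleft) (le_of_abs_le hright)

end Bridge

section Level

variable {n : ℕ} (p : Fin n → Step)

/-- The height of `p` after its first `m` steps. -/
def level (m : ℕ) : ℤ := countIn p Step.U m - countIn p Step.D m

theorem countIn_succ (s : Step) (i : Fin n) :
    countIn p s (i + 1) = countIn p s i + if p i = s then 1 else 0 := by
  unfold countIn
  split_ifs with h
  · rw [← card_insert_of_notMem (s := {j : Fin n | (j : ℕ) < i ∧ p j = s}) (a := i) (by simp)]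
    congr 1
    ext j
    simp only [mem_filter, mem_univ, true_and, mem_insert, Nat.lt_succ_iff_lt_or_eq]
    constructor
    · rintro ⟨hj | hj, hpj⟩
      exacts [Or.inr ⟨hj, hpj⟩, Or.inl (Fin.ext hj)]
    · rintro (rfl | ⟨hj, hpj⟩)
      exacts [⟨Or.inr rfl, h⟩, ⟨Or.inl hj, hpj⟩]
  · rw [add_zero]
    congr 1
    ext j
    simp only [mem_filter, mem_univ, true_and, Nat.lt_succ_iff_lt_or_eq]
    constructor
    · rintro ⟨hj | hj, hpj⟩
      exacts [⟨hj, hpj⟩, absurd (Fin.ext hj ▸ hpj) h]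
    · exact fun ⟨hj, hpj⟩ => ⟨Or.inl hj, hpj⟩

theorem card_filter_le_eq_countIn (s : Step) (i : Fin n) :
    #{j | j ≤ i ∧ p j = s} = countIn p s (i + 1) := by
  simp only [countIn, Fin.le_def, Nat.lt_succ_iff]

theorem level_zero : level p 0 = 0 := by
  simp [level, countIn]

theorem level_succ (i : Fin n) : level p (i + 1) = level p i + (p i).rise := by
  simp only [level, countIn_succ]
  cases p i <;> simp [Step.rise] <;> ring

theorem sum_rise_eq_level : ∑ i, (p i).rise = level p n := by
  calc ∑ i, (p i).rise = ∑ i : Fin n, (level p (i + 1) - level p i) := by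
        simp only [level_succ, add_sub_cancel_left]
    _ = ∑ j ∈ range n, (level p (j + 1) - level p j) :=
        Fin.sum_univ_eq_sum_range (fun j => level p (j + 1) - level p j) n
    _ = level p n := by rw [sum_range_sub, level_zero, sub_zero]

theorem heightAt_eq_level (i : Fin n) (hi : 0 ≤ level p (i + 1)) :
    (heightAt p i : ℤ) = level p (i + 1) + if p i = Step.D then 1 else 0 := by
  have hcount : countIn p Step.D (i + 1) ≤ countIn p Step.U (i + 1) := by
    unfold level at hi
    omega
  rw [heightAt, card_filter_le_eq_countIn, card_filter_le_eq_countIn, level]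
  push_cast [Nat.cast_sub hcount]
  split_ifs <;> simp

/-- Each step contributes the height before it, corrected by half its rise. -/
theorem area_eq_sum_level (hp : ∀ m ≤ n, 0 ≤ level p m) :
    area p = ∑ i : Fin n, (level p i : ℚ) + (level p n : ℚ) / 2 := by
  have hstep : ∀ i : Fin n,
      ((if p i = Step.H then (heightAt p i : ℚ) else 0) +
        if p i = Step.U ∨ p i = Step.D then (heightAt p i : ℚ) - 1 / 2 else 0) =
      level p i + ((p i).rise : ℚ) / 2 := by
    intro i
    have hh := heightAt_eq_level p i (hp _ i.isLt)
    have hl := level_succ p i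
    have hh' : (heightAt p i : ℚ) = level p (i + 1) + if p i = Step.D then 1 else 0 := by
      exact_mod_cast hh
    rw [hh', show (level p (i + 1) : ℚ) = level p i + (p i).rise by exact_mod_cast hl]
    cases p i <;> simp [Step.rise] <;> ring
  rw [area, sum_filter, sum_filter, ← sum_add_distrib, sum_congr rfl fun i _ => hstep i,
    sum_add_distrib, ← sum_div, ← sum_rise_eq_level]
  push_cast
  rfl

theorem level_eq_of_succ (g : ℕ → ℤ) (hg0 : g 0 = 0)
    (hg : ∀ i : Fin n, g (i + 1) = g i + (p i).rise) : ∀ m ≤ n, level p m = g m := by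
  intro m hm
  induction m with
  | zero => rw [level_zero, hg0]
  | succ m ih =>
    have hsucc := level_succ p ⟨m, hm⟩
    have hgsucc := hg ⟨m, hm⟩
    dsimp only at hsucc hgsucc
    rw [hsucc, hgsucc, ih (by omega)]

theorem isMotzkin_iff_level : IsMotzkin p ↔ (∀ m ≤ n, 0 ≤ level p m) ∧ level p n = 0 := by
  simp only [IsMotzkin, level, sub_nonneg, sub_eq_zero, Nat.cast_le, Nat.cast_inj]

theorem abs_level_succ_sub_le_one : ∀ m < n, |level p (m + 1) - level p m| ≤ 1 := by
  intro m hm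
  rw [show m = (⟨m, hm⟩ : Fin n) from rfl, level_succ, add_sub_cancel_left]
  cases p ⟨m, hm⟩ <;> simp [Step.rise]

theorem area_eq_sum_range_level (hp : ∀ m ≤ n, 0 ≤ level p m) (hn : level p n = 0) :
    area p = ∑ j ∈ range n, (level p j : ℚ) := by
  rw [area_eq_sum_level p hp, hn, Int.cast_zero, zero_div, add_zero,
    Fin.sum_univ_eq_sum_range (fun j => (level p j : ℚ))]

theorem area_le_of_isMotzkin (hp : IsMotzkin p) : area p ≤ ((n ^ 2 / 4 : ℕ) : ℚ) := by
  obtain ⟨hnonneg, hn⟩ := (isMotzkin_iff_level p).1 hp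
  rw [area_eq_sum_range_level p hnonneg hn]
  have hsum := sum_range_le_of_abs_succ_sub_le_one (level_zero p) hn (abs_level_succ_sub_le_one p)
  rw [← Int.cast_natCast, ← Int.cast_sum]
  exact Int.cast_le.2 hsum

theorem area_eq_of_level_eq_min (hp : ∀ m ≤ n, level p m = min m (n - m)) :
    area p = ((n ^ 2 / 4 : ℕ) : ℚ) := by
  have hnonneg : ∀ m ≤ n, 0 ≤ level p m := fun m hm => by rw [hp m hm]; positivity
  rw [area_eq_sum_range_level p hnonneg (by simp [hp n le_rfl]), ← sum_range_min_sub,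
    Nat.cast_sum]
  exact sum_congr rfl fun j hj => by rw [hp j (mem_range.1 hj).le]; push_cast; rfl

end Level

theorem level_ukdk (k : ℕ) : ∀ m ≤ 2 * k, level (ukdk k) m = min m (2 * k - m) := by
  refine level_eq_of_succ _ _ (by simp) fun i => ?_
  have := i.isLt
  unfold ukdk
  split_ifs <;> simp only [Step.rise] <;> omega

theorem level_ukhdk (k : ℕ) :
    ∀ m ≤ 2 * k + 1, level (ukhdk k) m = min m (2 * k + 1 - m) := by
  refine level_eq_of_succ _ _ (by simp) fun i => ?_
  have := i.isLt
  unfold ukhdk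
  split_ifs <;> simp only [Step.rise] <;> omega

/-- Every Motzkin path `p` of length `n` has area at most `⌊n²/4⌋`, and the
bound is attained: `ar(U^k D^k) = ⌊(2k)²/4⌋` and `ar(U^k H D^k) = ⌊(2k+1)²/4⌋`. -/
theorem area_le_and_attained :
    (∀ (n : ℕ) (p : Fin n → Step), IsMotzkin p →
      area p ≤ ((n ^ 2 / 4 : ℕ) : ℚ)) ∧
    (∀ k : ℕ, area (ukdk k) = (((2 * k) ^ 2 / 4 : ℕ) : ℚ)) ∧
    (∀ k : ℕ, area (ukhdk k) = (((2 * k + 1) ^ 2 / 4 : ℕ) : ℚ)) :=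
  ⟨fun _ p hp => area_le_of_isMotzkin p hp,
    fun k => area_eq_of_level_eq_min _ (level_ukdk k),
    fun k => area_eq_of_level_eq_min _ (level_ukhdk k)⟩
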